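/- Let (q(t),p(t)) be a solution of the Kepler equations q̇ = p, ṗ = −q/|q|³ with H < 0, and define r₀ = |p|²|q|−1, r̄ = √(−2H)|q|p, s₀ = −√(−2H)⟨q,p⟩, s̄ = −(q/|q| − ⟨q,p⟩p). Then along the flow: ṙ₀ = (√(−2H)/|q|)s₀, ṙ̄ = (√(−2H)/|q|)s̄, ṡ₀ = −(√(−2H)/|q|)r₀, ṡ̄ = −(√(−2H)/|q|)r̄. Consequently (r(t),s(t)) = (cos θ(t) r(0) + sin θ(t) s(0), −sin θ(t) r(0) + cos θ(t) s(0)) where θ̇ = √(−2H)/|q(t)|, θ(0)=0. -/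

import Mathlib

open scoped RealInnerProductSpace

noncomputable section

abbrev E3 := EuclideanSpace ℝ (Fin 3)

/-- r₀ = |p|²|q| − 1. -/
def r0 (q p : ℝ → E3) (t : ℝ) : ℝ := ‖p t‖ ^ 2 * ‖q t‖ - 1

/-- r̄ = √(−2H)|q|p. -/
def rbar (h : ℝ) (q p : ℝ → E3) (t : ℝ) : E3 := Real.sqrt (-2 * h) • ‖q t‖ • p t

/-- s₀ = −√(−2H)⟨q,p⟩. -/
def s0 (h : ℝ) (q p : ℝ → E3) (t : ℝ) : ℝ := -Real.sqrt (-2 * h) * ⟪q t, p t⟫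

/-- s̄ = −(q/|q| − ⟨q,p⟩p). -/
def sbar (q p : ℝ → E3) (t : ℝ) : E3 := -(‖q t‖⁻¹ • q t - ⟪q t, p t⟫ • p t)

theorem moser_flow_is_geodesic
    (q p : ℝ → E3) (h : ℝ) (hh : h < 0)
    (hq0 : ∀ t, q t ≠ 0)
    (hq' : ∀ t, HasDerivAt q (p t) t)
    (hp' : ∀ t, HasDerivAt p (-((‖q t‖ ^ 3)⁻¹ • q t)) t)
    (hH : ∀ t, ‖p t‖ ^ 2 / 2 - ‖q t‖⁻¹ = h) :
    (∀ t, HasDerivAt (r0 q p) (Real.sqrt (-2 * h) / ‖q t‖ * s0 h q p t) t) ∧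
    (∀ t, HasDerivAt (rbar h q p) ((Real.sqrt (-2 * h) / ‖q t‖) • sbar q p t) t) ∧
    (∀ t, HasDerivAt (s0 h q p) (-(Real.sqrt (-2 * h) / ‖q t‖) * r0 q p t) t) ∧
    (∀ t, HasDerivAt (sbar q p) (-((Real.sqrt (-2 * h) / ‖q t‖) • rbar h q p t)) t) ∧
    (∀ θ : ℝ → ℝ, θ 0 = 0 →
      (∀ t, HasDerivAt θ (Real.sqrt (-2 * h) / ‖q t‖) t) →
      ∀ t,
        r0 q p t = Real.cos (θ t) * r0 q p 0 + Real.sin (θ t) * s0 h q p 0 ∧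
        rbar h q p t = Real.cos (θ t) • rbar h q p 0 + Real.sin (θ t) • sbar q p 0 ∧
        s0 h q p t = -Real.sin (θ t) * r0 q p 0 + Real.cos (θ t) * s0 h q p 0 ∧
        sbar q p t = -(Real.sin (θ t) • rbar h q p 0) + Real.cos (θ t) • sbar q p 0) := by
  set c : ℝ := Real.sqrt (-2 * h) with hc
  have hn : ∀ t, ‖q t‖ ≠ 0 := fun t => norm_ne_zero_iff.2 (hq0 t)
  have hc2 : c ^ 2 = -2 * h := Real.sq_sqrt (by linarith)
  have hE : ∀ t, ‖p t‖ ^ 2 = 2 * ‖q t‖⁻¹ - c ^ 2 := by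
    intro t; have := hH t; rw [hc2]; linarith
  -- derivative of ‖q t‖
  have hnq : ∀ t, HasDerivAt (fun t => ‖q t‖) (⟪q t, p t⟫ / ‖q t‖) t := by
    intro t
    have hx : (0:ℝ) < ⟪q t, q t⟫ := by
      rw [real_inner_self_eq_norm_sq]
      exact pow_pos (norm_pos_iff.2 (hq0 t)) 2
    have h1 : HasDerivAt (fun t => ⟪q t, q t⟫) (⟪q t, p t⟫ + ⟪p t, q t⟫) t :=
      (hq' t).inner ℝ (hq' t)
    have h2 := (Real.hasDerivAt_sqrt hx.ne').comp t h1
    simp only [Function.comp_def] at h2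
    have heq : (fun t => Real.sqrt ⟪q t, q t⟫) = fun t => ‖q t‖ := by
      funext s
      rw [real_inner_self_eq_norm_sq, Real.sqrt_sq (norm_nonneg _)]
    rw [heq] at h2
    refine h2.congr_deriv (Eq.symm ?_)
    rw [real_inner_self_eq_norm_sq, Real.sqrt_sq (norm_nonneg _), real_inner_comm (p t)]
    field_simp [hn t]
    ring
  -- derivative of ⟪q t, p t⟫
  have hqp : ∀ t, HasDerivAt (fun t => ⟪q t, p t⟫)
      (‖p t‖ ^ 2 - ‖q t‖⁻¹) t := by
    intro t
    have h1 := (hq' t).inner ℝ (hp' t)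
    refine h1.congr_deriv (Eq.symm ?_)
    simp only [inner_neg_right, inner_neg_left, real_inner_smul_right, real_inner_smul_left,
      real_inner_self_eq_norm_sq, real_inner_comm (p t) (q t)]
    field_simp [hn t]
    ring
  -- derivative of ‖p t‖ ^ 2
  have hnp2 : ∀ t, HasDerivAt (fun t => ‖p t‖ ^ 2)
      (-2 * (‖q t‖ ^ 3)⁻¹ * ⟪q t, p t⟫) t := by
    intro t
    have h1 := (hp' t).inner ℝ (hp' t)
    have heq : (fun t => ⟪p t, p t⟫) = fun t => ‖p t‖ ^ 2 := by
      funext s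
      rw [real_inner_self_eq_norm_sq]
    rw [heq] at h1
    refine h1.congr_deriv (Eq.symm ?_)
    simp only [inner_neg_right, inner_neg_left, real_inner_smul_right, real_inner_smul_left,
      real_inner_comm (p t) (q t)]
    ring
  have hcs : Real.sqrt (-(h * 2)) = c := by rw [hc]; congr 1; ring
  have hcs2 : Real.sqrt (-(2 * h)) = c := by rw [hc]; congr 1; ring
  -- the four derivative claims
  have Dr0 : ∀ t, HasDerivAt (r0 q p) (c / ‖q t‖ * s0 h q p t) t := by
    intro t
    have h1 := ((hnp2 t).mul (hnq t)).sub_const 1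
    refine h1.congr_deriv (Eq.symm ?_)
    simp only [s0]
    rw [hE t]
    field_simp [hn t]
    try simp only [hcs, hcs2]
    try ring
  have Drb : ∀ t, HasDerivAt (rbar h q p) ((c / ‖q t‖) • sbar q p t) t := by
    intro t
    have h1 := ((hnq t).smul (hp' t)).const_smul c
    refine h1.congr_deriv (Eq.symm ?_)
    simp only [sbar, smul_neg, smul_sub, smul_smul]
    match_scalars <;> (try field_simp [hn t]) <;> (try simp only [hcs, hcs2]) <;> try ring
  have Ds0 : ∀ t, HasDerivAt (s0 h q p) (-(c / ‖q t‖) * r0 q p t) t := by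
    intro t
    have h1 := (hqp t).const_mul (-c)
    refine h1.congr_deriv (Eq.symm ?_)
    simp only [r0]
    rw [hE t]
    field_simp [hn t]
    try simp only [hcs, hcs2]
    try ring
  have Dsb : ∀ t, HasDerivAt (sbar q p) (-((c / ‖q t‖) • rbar h q p t)) t := by
    intro t
    have h1 := ((((hnq t).inv (hn t)).smul (hq' t)).sub ((hqp t).smul (hp' t))).neg
    refine h1.congr_deriv (Eq.symm ?_)
    simp only [rbar, smul_neg, smul_sub, smul_smul, sub_smul, add_smul, Pi.inv_apply]
    rw [hE t]
    match_scalars <;> (try field_simp [hn t]) <;> (try simp only [hcs, hcs2]) <;> try ring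
  refine ⟨Dr0, Drb, Ds0, Dsb, ?_⟩
  intro θ hθ0 hθ' t
  -- constancy of the rotated quantities
  have const0 : ∀ f : ℝ → ℝ, (∀ s, HasDerivAt f 0 s) → f t = f 0 := by
    intro f hf
    exact is_const_of_deriv_eq_zero (fun s => (hf s).differentiableAt)
      (fun s => (hf s).deriv) t 0
  have constV : ∀ f : ℝ → E3, (∀ s, HasDerivAt f 0 s) → f t = f 0 := by
    intro f hf
    exact is_const_of_deriv_eq_zero (fun s => (hf s).differentiableAt)
      (fun s => (hf s).deriv) t 0
  have hu0 : Real.cos (θ t) * r0 q p t - Real.sin (θ t) * s0 h q p t = r0 q p 0 := by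
    have := const0 (fun s => Real.cos (θ s) * r0 q p s - Real.sin (θ s) * s0 h q p s) ?_
    · simpa [hθ0] using this
    intro s
    have h1 := (((hθ' s).cos.mul (Dr0 s)).sub ((hθ' s).sin.mul (Ds0 s)))
    refine h1.congr_deriv (Eq.symm ?_)
    ring
  have hw0 : Real.sin (θ t) * r0 q p t + Real.cos (θ t) * s0 h q p t = s0 h q p 0 := by
    have := const0 (fun s => Real.sin (θ s) * r0 q p s + Real.cos (θ s) * s0 h q p s) ?_
    · simpa [hθ0] using this
    intro s
    have h1 := (((hθ' s).sin.mul (Dr0 s)).add ((hθ' s).cos.mul (Ds0 s)))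
    refine h1.congr_deriv (Eq.symm ?_)
    ring
  have hub : Real.cos (θ t) • rbar h q p t - Real.sin (θ t) • sbar q p t = rbar h q p 0 := by
    have := constV (fun s => Real.cos (θ s) • rbar h q p s - Real.sin (θ s) • sbar q p s) ?_
    · simpa [hθ0] using this
    intro s
    have h1 := (((hθ' s).cos.smul (Drb s)).sub ((hθ' s).sin.smul (Dsb s)))
    refine h1.congr_deriv (Eq.symm ?_)
    module
  have hwb : Real.sin (θ t) • rbar h q p t + Real.cos (θ t) • sbar q p t = sbar q p 0 := by
    have := constV (fun s => Real.sin (θ s) • rbar h q p s + Real.cos (θ s) • sbar q p s) ?_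
    · simpa [hθ0] using this
    intro s
    have h1 := (((hθ' s).sin.smul (Drb s)).add ((hθ' s).cos.smul (Dsb s)))
    refine h1.congr_deriv (Eq.symm ?_)
    module
  have hpy := Real.sin_sq_add_cos_sq (θ t)
  refine ⟨?_, ?_, ?_, ?_⟩
  · rw [← hu0, ← hw0]; linear_combination (-r0 q p t) * hpy
  · rw [← hub, ← hwb]
    match_scalars
    all_goals linarith [hpy]
  · rw [← hu0, ← hw0]; linear_combination (-s0 h q p t) * hpy
  · rw [← hub, ← hwb]
    match_scalars
    all_goals linarith [hpy]

end
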